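/- arXiv:1412.4419 — 5 statements merged into one kernel-verified Lean document; each statement's English description precedes it below -/
import Mathlib

section
/- Let G, U : ℕ → M₂(ℂ) satisfy G_0 = U_0 = I and ∑_{j=0}^{n} G_j·U_{n−j} = 0 for all n ≥ 1, and define the matrix-valued affine coordinates Z_{k,l} := −∑_{j=0}^{k} G_j·U_{k+l+1−j} for k, l ≥ 0. Then for all k, l ≥ 0 the recursion Z_{k+1,l} − Z_{k,l+1} = −G_{k+1}·U_{l+1} = Z_{k,0}·Z_{0,l} holds. -/
open Finset

def affineCoord {R : Type*} [NonUnitalNonAssocRing R] (G U : ℕ → R) (k l : ℕ) : R :=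
  -∑ j ∈ range (k + 1), G j * U (k + l + 1 - j)

section

variable {R : Type*}

theorem affineCoord_succ_left_sub_succ_right [NonUnitalNonAssocRing R] (G U : ℕ → R) (k l : ℕ) :
    affineCoord G U (k + 1) l - affineCoord G U k (l + 1) = -(G (k + 1) * U (l + 1)) := by
  rw [affineCoord, affineCoord, sum_range_succ, show k + 1 + l = k + (l + 1) by omega,
    show k + (l + 1) + 1 - (k + 1) = l + 1 by omega]
  abel

theorem affineCoord_zero_left [Ring R] (G U : ℕ → R) (hG0 : G 0 = 1) (l : ℕ) :
    affineCoord G U 0 l = -U (l + 1) := by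
  simp [affineCoord, hG0]

/-- The coefficient of `x^{k+1}` in `G(x) U(x) = 1` makes `Z_{k,0}` the missing last term. -/
theorem affineCoord_zero_right [Ring R] (G U : ℕ → R) (hU0 : U 0 = 1) (k : ℕ)
    (hinv : ∑ j ∈ range (k + 2), G j * U (k + 1 - j) = 0) :
    affineCoord G U k 0 = G (k + 1) := by
  rw [sum_range_succ, Nat.sub_self, hU0, mul_one, add_eq_zero_iff_eq_neg] at hinv
  simpa [affineCoord] using congrArg Neg.neg hinv

end

/-- Recursion relation `Z_{k+1,l} - Z_{k,l+1} = -G_{k+1}·U_{l+1} = Z_{k,0}·Z_{0,l}`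
for the matrix-valued affine coordinates. -/
theorem matrix_affine_coordinates_recursion
    (G U : ℕ → Matrix (Fin 2) (Fin 2) ℂ)
    (hG0 : G 0 = 1) (hU0 : U 0 = 1)
    (hinv : ∀ n : ℕ, 1 ≤ n → ∑ j ∈ Finset.range (n + 1), G j * U (n - j) = 0)
    (Z : ℕ → ℕ → Matrix (Fin 2) (Fin 2) ℂ)
    (hZ : ∀ k l : ℕ, Z k l = -∑ j ∈ Finset.range (k + 1), G j * U (k + l + 1 - j)) :
    ∀ k l : ℕ,
      Z (k + 1) l - Z k (l + 1) = -(G (k + 1) * U (l + 1)) ∧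
      Z (k + 1) l - Z k (l + 1) = Z k 0 * Z 0 l := by
  obtain rfl : Z = affineCoord G U := funext fun k => funext (hZ k)
  intro k l
  refine ⟨affineCoord_succ_left_sub_succ_right G U k l, ?_⟩
  rw [affineCoord_succ_left_sub_succ_right, affineCoord_zero_left G U hG0,
    affineCoord_zero_right G U hU0 k (hinv (k + 1) k.succ_pos), mul_neg]
end

section
/- Let G, U : ℕ → M₂(ℂ) satisfy G_0 = U_0 = I and ∑_{j=0}^{n} G_j·U_{n−j} = 0 for all n ≥ 1, and define Z_{k,l} := −∑_{j=0}^{k} G_j·U_{k+l+1−j}. Assume moreover that the determinant of the matrix of power series ∑_{n} G_n·x^n (viewed as an element of M₂(ℂ[[x]])) equals the constant power series 1. Then with σ₂ := [[0, −i],[i, 0]]: (a) U_n = σ₂·(G_n)ᵀ·σ₂ for all n ≥ 0, so that Z_{k,l} = −∑_{j=0}^{k} G_j·σ₂·(G_{k+l+1−j})ᵀ·σ₂; and (b) the symmetry Z_{l,k} = −σ₂·(Z_{k,l})ᵀ·σ₂ holds for all k, l ≥ 0. -/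
/-!
Over `ℂ`, `σ₂ Aᵀ σ₂` is the adjugate of a `2 × 2` matrix `A`. Because `det (∑ Gₙ xⁿ) = 1`, the
series `∑ adj(Gₙ) xⁿ` is a left inverse of `∑ Gₙ xⁿ` in `M₂(ℂ)⟦x⟧`, hence equals its right
inverse `∑ Uₙ xⁿ`. On `2 × 2` matrices the adjugate is additive, reverses products and is an
involution, so it sends `Z_{k,l}` to `-∑_{j ≤ k} G_{k+l+1-j} U_j`; the vanishing of the
`(k+l+1)`-st coefficient of `(∑ Gₙ xⁿ)(∑ Uₙ xⁿ)` identifies this sum with `-Z_{l,k}`.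
-/

open Matrix PowerSeries Finset

local notation "σ₂" => (!![0, -Complex.I; Complex.I, 0] : Matrix (Fin 2) (Fin 2) ℂ)

namespace Matrix

variable {R : Type*} {n : Type*}

noncomputable def toPowerSeries [Semiring R] (M : Matrix n n R⟦X⟧) : (Matrix n n R)⟦X⟧ :=
  PowerSeries.mk fun k => M.map (coeff k)

variable [Fintype n] [DecidableEq n]

@[simp]
theorem coeff_toPowerSeries [Semiring R] (M : Matrix n n R⟦X⟧) (k : ℕ) :
    coeff k M.toPowerSeries = M.map (coeff k) :=
  coeff_mk _ _

theorem toPowerSeries_mul [Semiring R] (M N : Matrix n n R⟦X⟧) :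
    (M * N).toPowerSeries = M.toPowerSeries * N.toPowerSeries := by
  ext k i j
  simp only [coeff_toPowerSeries, map_apply, mul_apply, map_sum, coeff_mul, sum_apply]
  exact Finset.sum_comm

theorem toPowerSeries_one [Semiring R] :
    (1 : Matrix n n R⟦X⟧).toPowerSeries = 1 := by
  ext k i j
  by_cases hij : i = j <;> by_cases hk : k = 0 <;> simp [coeff_one, hij, hk]

theorem toPowerSeries_adjugate_mul [CommRing R] {M : Matrix n n R⟦X⟧} (h : M.det = 1) :
    M.adjugate.toPowerSeries * M.toPowerSeries = 1 := by
  rw [← toPowerSeries_mul, adjugate_mul, h, one_smul, toPowerSeries_one]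

theorem map_coeff_adjugate_fin_two [CommRing R] (M : Matrix (Fin 2) (Fin 2) R⟦X⟧) (k : ℕ) :
    M.adjugate.map (coeff k) = (M.map (coeff k)).adjugate := by
  ext i j
  fin_cases i <;> fin_cases j <;> simp [adjugate_fin_two]

theorem adjugate_fin_two_add [CommRing R] (A B : Matrix (Fin 2) (Fin 2) R) :
    (A + B).adjugate = A.adjugate + B.adjugate := by
  ext i j
  fin_cases i <;> fin_cases j <;> simp [adjugate_fin_two, add_comm]

theorem adjugate_fin_two_neg [CommRing R] (A : Matrix (Fin 2) (Fin 2) R) :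
    (-A).adjugate = -A.adjugate := by
  ext i j
  fin_cases i <;> fin_cases j <;> simp [adjugate_fin_two]

theorem adjugate_sum_mul_adjugate_fin_two [CommRing R] {ι : Type*} (s : Finset ι)
    (A B : ι → Matrix (Fin 2) (Fin 2) R) :
    (∑ i ∈ s, A i * (B i).adjugate).adjugate = ∑ i ∈ s, B i * (A i).adjugate := by
  have hsum := map_sum (AddMonoidHom.mk' (fun C : Matrix (Fin 2) (Fin 2) R => C.adjugate)
    adjugate_fin_two_add) (fun i => A i * (B i).adjugate) s
  simp only [AddMonoidHom.mk'_apply] at hsum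
  rw [hsum]
  refine Finset.sum_congr rfl fun i _ => ?_
  rw [adjugate_mul_distrib, adjugate_adjugate _ (by simp)]
  simp

theorem sigma_two_mul_transpose_mul_sigma_two (A : Matrix (Fin 2) (Fin 2) ℂ) :
    σ₂ * Aᵀ * σ₂ = A.adjugate := by
  ext i j
  fin_cases i <;> fin_cases j <;>
    simp [adjugate_fin_two, mul_apply, vecMul, dotProduct, Fin.sum_univ_two,
      mul_right_comm _ _ Complex.I]

end Matrix

theorem PowerSeries.mk_mul_mk_eq_one {R : Type*} [Semiring R] {f g : ℕ → R} (h0 : f 0 * g 0 = 1)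
    (h : ∀ n : ℕ, 1 ≤ n → ∑ j ∈ range (n + 1), f j * g (n - j) = 0) : mk f * mk g = 1 := by
  ext n
  rw [coeff_mul, Nat.sum_antidiagonal_eq_sum_range_succ_mk, coeff_one]
  rcases Nat.eq_zero_or_pos n with rfl | hn
  · simpa using h0
  · simpa [hn.ne'] using h n hn

theorem sum_range_mul_eq_neg_sum_range_mul {R : Type*} [Ring R] {f g : ℕ → R}
    (h : ∀ n : ℕ, 1 ≤ n → ∑ j ∈ range (n + 1), f j * g (n - j) = 0) (k l : ℕ) :
    ∑ j ∈ range (l + 1), f j * g (k + l + 1 - j) =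
      -∑ j ∈ range (k + 1), f (k + l + 1 - j) * g j := by
  have hsplit := h (k + l + 1) (by omega)
  rw [show k + l + 1 + 1 = (l + 1) + (k + 1) by ring, sum_range_add] at hsplit
  have htail : ∑ j ∈ range (k + 1), f (l + 1 + j) * g (k + l + 1 - (l + 1 + j)) =
      ∑ j ∈ range (k + 1), f (k + l + 1 - j) * g j := by
    rw [← sum_range_reflect]
    refine Finset.sum_congr rfl fun j hj => ?_
    have hj : j < k + 1 := mem_range.mp hj
    congr 2 <;> omega
  rw [← htail]
  exact eq_neg_of_add_eq_zero_left hsplit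

/-- If `det(∑ G_n x^n) = 1` then `U_n = σ₂ G_nᵀ σ₂`, so that
`Z_{k,l} = -∑_{j=0}^k G_j σ₂ G_{k+l+1-j}ᵀ σ₂`, and the symmetry
`Z_{l,k} = -σ₂ Z_{k,l}ᵀ σ₂` holds. -/
theorem matrix_affine_coordinates_symmetry
    (G U : ℕ → Matrix (Fin 2) (Fin 2) ℂ)
    (hG0 : G 0 = 1) (hU0 : U 0 = 1)
    (hinv : ∀ n : ℕ, 1 ≤ n → ∑ j ∈ Finset.range (n + 1), G j * U (n - j) = 0)
    (Z : ℕ → ℕ → Matrix (Fin 2) (Fin 2) ℂ)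
    (hZ : ∀ k l : ℕ, Z k l = -∑ j ∈ Finset.range (k + 1), G j * U (k + l + 1 - j))
    (Gser : Matrix (Fin 2) (Fin 2) (PowerSeries ℂ))
    (hGser : ∀ (n : ℕ) (i j : Fin 2), PowerSeries.coeff (R := ℂ) n (Gser i j) = G n i j)
    (hdet : Gser.det = 1) :
    (∀ n : ℕ, U n = !![0, -Complex.I; Complex.I, 0] * (G n)ᵀ *
        !![0, -Complex.I; Complex.I, 0]) ∧
    (∀ k l : ℕ, Z k l = -∑ j ∈ Finset.range (k + 1),
        G j * !![0, -Complex.I; Complex.I, 0] * (G (k + l + 1 - j))ᵀ *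
          !![0, -Complex.I; Complex.I, 0]) ∧
    (∀ k l : ℕ, Z l k = -(!![0, -Complex.I; Complex.I, 0] * (Z k l)ᵀ *
        !![0, -Complex.I; Complex.I, 0])) := by
  have hG : Gser.toPowerSeries = mk G := by
    ext n i j
    simp [hGser]
  have hadj : Gser.adjugate.toPowerSeries = mk fun n => (G n).adjugate := by
    ext n : 1
    rw [coeff_toPowerSeries, map_coeff_adjugate_fin_two, ← coeff_toPowerSeries, hG, coeff_mk,
      coeff_mk]
  have hU_eq : mk (fun n => (G n).adjugate) = mk U :=
    left_inv_eq_right_inv (hadj ▸ hG ▸ toPowerSeries_adjugate_mul hdet)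
      (mk_mul_mk_eq_one (by rw [hG0, hU0, one_mul]) hinv)
  have hU : ∀ n, U n = (G n).adjugate := fun n => by
    simpa using congrArg (coeff n) hU_eq.symm
  refine ⟨fun n => by rw [hU, sigma_two_mul_transpose_mul_sigma_two], fun k l => ?_, fun k l => ?_⟩
  · simp only [hZ, hU, ← sigma_two_mul_transpose_mul_sigma_two, mul_assoc]
  · rw [sigma_two_mul_transpose_mul_sigma_two, hZ l k, add_comm l k,
      sum_range_mul_eq_neg_sum_range_mul hinv, hZ k l, adjugate_fin_two_neg]
    simp only [neg_neg, hU, adjugate_sum_mul_adjugate_fin_two]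
end

section
/- Let C(x) := ∑_{k≥0} c_k·x^k and Q(x) := ∑_{k≥0} q_k·x^k in ℂ[[x]], where c_k := ((−1)^k/288^k)·(6k)!/((3k)!·(2k)!) and q_k := ((1+6k)/(1−6k))·c_k. Then C(x)·Q(−x) + C(−x)·Q(x) = 2 as formal power series. (This is the Itzykson–Zuber identity c(λ)q(−λ) + c(−λ)q(λ) ≡ 2 for the series c(λ) = ∑ c_k λ^{−3k}, q(λ) = ∑ q_k λ^{−3k}, in the variable x = λ^{−3}.) -/
/-!
In terms of the Euler operator `θ = x d/dx`, the recurrence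
`24 (k + 1) c_{k+1} = -(6k + 1)(6k + 5) c_k` says that `C` solves the second order equation
`24 θC + x (36 θ²C + 36 θC + 5 C) = 0`, while `q_k = c_k + ((6k - 5)/2) c_{k-1}` says that
`2Q = (2 + x) C + 6 x θC`. Since `θ` commutes with `x ↦ -x`, `C(-x)` solves the same equation with
`x` replaced by `-x`, and the two equations together kill the derivative of the Wronskian-type series
`W = 4 C(x) C(-x) + 6x (C(-x) θC(x) - θC(-x) C(x))`. Hence `W` equals its constant term `4`,
and `2 (C(x) Q(-x) + C(-x) Q(x))` is exactly `W`.
-/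

/-- `c_k := ((-1)^k/288^k)·(6k)!/((3k)!(2k)!)`. -/
noncomputable def cWK (k : ℕ) : ℂ :=
  ((-1) ^ k / 288 ^ k) * ((6 * k).factorial : ℂ) /
    (((3 * k).factorial : ℂ) * ((2 * k).factorial : ℂ))

/-- `q_k := ((1+6k)/(1-6k))·c_k`. -/
noncomputable def qWK (k : ℕ) : ℂ :=
  ((1 + 6 * (k : ℂ)) / (1 - 6 * (k : ℂ))) * cWK k

open PowerSeries

namespace PowerSeries

variable {R : Type*} [CommRing R]

instance [CharZero R] : CharZero R⟦X⟧ := (constantCoeff (R := R)).charZero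

theorem coeff_ofNat_mul (m : ℕ) [m.AtLeastTwo] (f : R⟦X⟧) (n : ℕ) :
    coeff n (ofNat(m) * f) = ofNat(m) * coeff n f := by
  rw [← map_ofNat C, coeff_C_mul]

theorem constantCoeff_rescale (a : R) (f : R⟦X⟧) :
    constantCoeff (rescale a f) = constantCoeff f := by
  rw [← coeff_zero_eq_constantCoeff_apply, coeff_rescale, pow_zero, one_mul,
    coeff_zero_eq_constantCoeff_apply]

variable (R) in
noncomputable def eulerDerivation : Derivation R R⟦X⟧ R⟦X⟧ := (X : R⟦X⟧) • derivative R

theorem eulerDerivation_apply (f : R⟦X⟧) : eulerDerivation R f = X * derivative R f := rfl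

theorem coeff_eulerDerivation (f : R⟦X⟧) (n : ℕ) :
    coeff n (eulerDerivation R f) = n * coeff n f := by
  cases n with
  | zero => simp [eulerDerivation_apply]
  | succ n =>
    rw [eulerDerivation_apply, coeff_succ_X_mul, coeff_derivative]
    push_cast
    ring

theorem eulerDerivation_X : eulerDerivation R X = X := by
  simp [eulerDerivation_apply]

theorem eulerDerivation_rescale (a : R) (f : R⟦X⟧) :
    eulerDerivation R (rescale a f) = rescale a (eulerDerivation R f) := by
  ext n
  simp only [coeff_eulerDerivation, coeff_rescale]
  ring

theorem eq_C_of_eulerDerivation_eq_zero [IsAddTorsionFree R] {f : R⟦X⟧}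
    (h : eulerDerivation R f = 0) : f = C (constantCoeff f) := by
  ext (_ | n)
  · simp
  · have hn := congrArg (coeff (n + 1)) h
    rw [coeff_eulerDerivation, map_zero, ← nsmul_eq_mul,
      nsmul_eq_zero_iff_right n.succ_ne_zero] at hn
    simp [hn]

end PowerSeries

section Wronskian

variable {R S : Type*} [CommRing R] [CommRing S] [Algebra R S] (d : Derivation R S S) (x : S)

def izOperator (f : S) : S := 24 * d f + x * (36 * d (d f) + 36 * d f + 5 * f)

def izPartner (f : S) : S := (2 + x) * f + 6 * x * d f

def izWronskian (f g : S) : S := 4 * f * g + 6 * x * (g * d f - d g * f)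

theorem map_izOperator (φ : S →+* S) (hφ : ∀ f, d (φ f) = φ (d f)) (f : S) :
    φ (izOperator d x f) = izOperator d (φ x) (φ f) := by
  simp [izOperator, hφ, map_ofNat]

theorem map_izPartner (φ : S →+* S) (hφ : ∀ f, d (φ f) = φ (d f)) (f : S) :
    φ (izPartner d x f) = izPartner d (φ x) (φ f) := by
  simp [izPartner, hφ, map_ofNat]

theorem mul_izPartner_add_mul_izPartner (f g : S) :
    f * izPartner d (-x) g + g * izPartner d x f = izWronskian d x f g := by
  simp only [izPartner, izWronskian]
  ring

theorem six_mul_derivation_izWronskian (hx : d x = x) {f g : S} (hf : izOperator d x f = 0)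
    (hg : izOperator d (-x) g = 0) : 6 * d (izWronskian d x f g) = 0 := by
  simp only [izOperator] at hf hg
  have h4 : d 4 = 0 := by exact_mod_cast d.map_natCast 4
  have h6 : d 6 = 0 := by exact_mod_cast d.map_natCast 6
  simp only [izWronskian, map_add, map_sub, Derivation.leibniz, smul_eq_mul, hx, h4, h6]
  linear_combination g * hf + f * hg

end Wronskian

theorem cWK_zero : cWK 0 = 1 := by simp [cWK]

theorem qWK_zero : qWK 0 = 1 := by simp [qWK, cWK_zero]

theorem cWK_succ (k : ℕ) :
    24 * (k + 1) * cWK (k + 1) = -((6 * k + 1) * (6 * k + 5)) * cWK k := by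
  have key : ((6 * (k + 1)).factorial * (3 * k).factorial * (2 * k).factorial * (k + 1) : ℂ) =
      12 * (6 * k + 1) * (6 * k + 5) * (6 * k).factorial * (3 * (k + 1)).factorial *
        (2 * (k + 1)).factorial := by
    rw [show 6 * (k + 1) = 6 * k + 5 + 1 by ring, show 3 * (k + 1) = 3 * k + 2 + 1 by ring,
      show 2 * (k + 1) = 2 * k + 1 + 1 by ring]
    push_cast [Nat.factorial_succ]
    ring
  have hfac (n : ℕ) : (n.factorial : ℂ) ≠ 0 := Nat.cast_ne_zero.mpr n.factorial_ne_zero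
  simp only [cWK]
  field_simp [hfac]
  rw [pow_succ, pow_succ]
  linear_combination (-24 * (-1) ^ k * 288 ^ k : ℂ) * key

theorem qWK_succ (k : ℕ) : 2 * qWK (k + 1) = 2 * cWK (k + 1) + (6 * k + 1) * cWK k := by
  have h : (1 - 6 * ((k + 1 : ℕ) : ℂ)) ≠ 0 := by
    rw [sub_ne_zero]
    exact_mod_cast (by omega : 1 ≠ 6 * (k + 1))
  rw [qWK]
  field_simp
  push_cast at h ⊢
  linear_combination cWK_succ k

local notation "θ" => eulerDerivation ℂ

theorem izOperator_mk_cWK : izOperator θ X (mk cWK) = 0 := by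
  ext (_ | n)
  · simp only [izOperator, map_add, coeff_ofNat_mul, coeff_zero_X_mul, coeff_eulerDerivation]
    simp
  · simp only [izOperator, map_add, coeff_ofNat_mul, coeff_succ_X_mul, coeff_eulerDerivation,
      coeff_mk, map_zero]
    push_cast
    linear_combination cWK_succ n

theorem izOperator_rescale_mk_cWK : izOperator θ (-X) (rescale (-1) (mk cWK)) = 0 := by
  rw [← rescale_neg_one_X, ← map_izOperator θ X _ (eulerDerivation_rescale (-1)),
    izOperator_mk_cWK, map_zero]

theorem two_mul_mk_qWK : 2 * mk qWK = izPartner θ X (mk cWK) := by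
  ext (_ | n)
  · simp only [izPartner, add_mul, map_add, coeff_ofNat_mul, mul_assoc, coeff_zero_X_mul, coeff_mk]
    simp [cWK_zero, qWK_zero]
  · simp only [izPartner, add_mul, map_add, coeff_ofNat_mul, mul_assoc, coeff_succ_X_mul,
      coeff_eulerDerivation, coeff_mk]
    linear_combination qWK_succ n

theorem two_mul_rescale_mk_qWK :
    2 * rescale (-1) (mk qWK) = izPartner θ (-X) (rescale (-1) (mk cWK)) := by
  rw [← rescale_neg_one_X, ← map_izPartner θ X _ (eulerDerivation_rescale (-1)),
    ← two_mul_mk_qWK, map_mul, map_ofNat]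

theorem izWronskian_mk_cWK : izWronskian θ X (mk cWK) (rescale (-1) (mk cWK)) = 4 := by
  have hW := six_mul_derivation_izWronskian θ X eulerDerivation_X izOperator_mk_cWK
    izOperator_rescale_mk_cWK
  rw [eq_C_of_eulerDerivation_eq_zero ((mul_eq_zero.mp hW).resolve_left (OfNat.ofNat_ne_zero 6))]
  simp [izWronskian, cWK_zero, map_ofNat, constantCoeff_rescale]

/-- The Itzykson–Zuber identity `c(λ)q(-λ) + c(-λ)q(λ) ≡ 2`, written in the
variable `x = λ^{-3}`: `C(x)·Q(-x) + C(-x)·Q(x) = 2` as formal power series,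
where `Q(-x) = rescale (-1) Q`. -/
theorem itzykson_zuber_identity (C Q : PowerSeries ℂ)
    (hC : ∀ k : ℕ, PowerSeries.coeff k C = cWK k)
    (hQ : ∀ k : ℕ, PowerSeries.coeff k Q = qWK k) :
    C * PowerSeries.rescale (-1) Q + PowerSeries.rescale (-1) C * Q = 2 := by
  obtain rfl : C = mk cWK := ext fun k => by rw [hC, coeff_mk]
  obtain rfl : Q = mk qWK := ext fun k => by rw [hQ, coeff_mk]
  refine mul_left_cancel₀ (two_ne_zero' ℂ⟦X⟧) ?_
  calc 2 * (mk cWK * rescale (-1) (mk qWK) + rescale (-1) (mk cWK) * mk qWK)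
      = mk cWK * (2 * rescale (-1) (mk qWK)) + rescale (-1) (mk cWK) * (2 * mk qWK) := by ring
    _ = izWronskian θ X (mk cWK) (rescale (-1) (mk cWK)) := by
      rw [two_mul_rescale_mk_qWK, two_mul_mk_qWK, mul_izPartner_add_mul_izPartner]
    _ = 2 * 2 := by rw [izWronskian_mk_cWK]; norm_num
end

section
/- Let R(z) ∈ M₂(ℂ[[z]]) have entries R(z)_{11} = ∑_{k≥0} q_{2k}·z^{2k}, R(z)_{12} = −∑_{k≥0} q_{2k+1}·z^{2k+1}, R(z)_{21} = −∑_{k≥0} c_{2k+1}·z^{2k+1}, R(z)_{22} = ∑_{k≥0} c_{2k}·z^{2k}, set R*(w) := η·R(w)ᵀ·η with η = [[0,1],[1,0]], and suppose V : ℕ × ℕ → M₂(ℂ) satisfies (w + z)·∑_{k,l≥0} (−1)^{k+l}·V_{k,l}·w^k·z^l = R*(w)·R(z) − I in M₂(ℂ[[w,z]]). Let G_n, U_n ∈ M₂(ℂ) be the Witten–Kontsevich matrix coefficients (defined in the context) and Z_{k,l} := −∑_{j=0}^{k} G_j·U_{k+l+1−j}. Then for all k, l ≥ 0: V_{2k,2l+1}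 = Z_{3k,3l+2}, V_{2l+1,2k} = −Z_{3l+2,3k}, V_{2k,2l} = −Z_{3k,3l+1} − Z_{3k,3l}, and V_{2k+1,2l+1} = Z_{3k+2,3l+2} + Z_{3k+2,3l+1}. -/
/-!
Comparing coefficients of `w^a z^b` in `(w + z) ∑ (-1)^{a+b} V_{a,b} w^a z^b = R*(w) R(z) - I`
gives `V_{a,b+1} + V_{a+1,b} = (-1)^{a+b+1} R*_{a+1} R_{b+1}` and `V_{0,b} = (-1)^b R*_0 R_{b+1}`,
hence `V_{a,b} = (-1)^b ∑_{p ≤ a} (-1)^p R*_p R_{a+b+1-p}`.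
On the other side `G_{3j} = R*_{2j}` and `U_{3j} = R_{2j}`, while `G_{3j+1}, G_{3j+2}` (resp.
`U_{3j+1}, U_{3j+2}`) are the upper and lower triangular parts of `-R*_{2j+1}` (resp. `R_{2j+1}`),
so that `G_{3i+1} U_{3j+1} = G_{3i+2} U_{3j+2} = 0`. Grouping the sums defining `Z` in blocks of
three consecutive indices and the alternating sums for `V` in pairs, the two agree block by block.
-/

open Matrix

/-- The coefficient of `z^n` in the `R`-matrix of the `A₂` Frobenius manifold:
`R(z) = [[∑ q_{2k} z^{2k}, -∑ q_{2k+1} z^{2k+1}], [-∑ c_{2k+1} z^{2k+1}, ∑ c_{2k} z^{2k}]]`. -/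
noncomputable def Rcoef (n : ℕ) : Matrix (Fin 2) (Fin 2) ℂ :=
  if n % 2 = 0 then !![qWK n, 0; 0, cWK n] else !![0, -qWK n; -cWK n, 0]

open Finset MvPowerSeries

theorem sum_range_three_mul_eq_sum_range_two_mul {M : Type*} [AddCommMonoid M] (F P : ℕ → M)
    (m : ℕ) (h0 : ∀ i < m, F (3 * i) = P (2 * i))
    (h1 : ∀ i < m, F (3 * i + 1) + F (3 * i + 2) = P (2 * i + 1)) :
    ∑ j ∈ range (3 * m), F j = ∑ p ∈ range (2 * m), P p := by
  induction m with
  | zero => simp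
  | succ m ih =>
    rw [show 3 * (m + 1) = 3 * m + 2 + 1 by ring, show 2 * (m + 1) = 2 * m + 1 + 1 by ring]
    simp only [sum_range_succ]
    rw [ih (fun i hi => h0 i (by omega)) (fun i hi => h1 i (by omega)), h0 m (by omega),
      ← h1 m (by omega), add_assoc, add_assoc]

theorem sum_range_three_mul_add_one_eq_sum_range_two_mul_add_one {M : Type*} [AddCommMonoid M]
    (F P : ℕ → M) (m : ℕ) (h0 : ∀ i ≤ m, F (3 * i) = P (2 * i))
    (h1 : ∀ i < m, F (3 * i + 1) + F (3 * i + 2) = P (2 * i + 1)) :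
    ∑ j ∈ range (3 * m + 1), F j = ∑ p ∈ range (2 * m + 1), P p := by
  rw [sum_range_succ, sum_range_succ, h0 m le_rfl,
    sum_range_three_mul_eq_sum_range_two_mul F P m (fun i hi => h0 i hi.le) h1]

theorem eq_neg_one_pow_smul_sum {M : Type*} [AddCommGroup M] {V C : ℕ → ℕ → M}
    (h0 : ∀ b, (-1 : ℤ) ^ b • V 0 b = C 0 (b + 1))
    (hsucc : ∀ a b, (-1 : ℤ) ^ (a + b + 1) • (V a (b + 1) + V (a + 1) b) = C (a + 1) (b + 1))
    (a b : ℕ) :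
    V a b = (-1 : ℤ) ^ b • ∑ p ∈ range (a + 1), (-1 : ℤ) ^ p • C p (a + b + 1 - p) := by
  induction a generalizing b with
  | zero =>
    rw [zero_add, sum_range_one, pow_zero, one_smul, zero_add, Nat.sub_zero, ← h0, smul_smul,
      ← pow_add, Even.neg_one_pow ⟨b, rfl⟩, one_smul]
  | succ a ih =>
    have hV : V (a + 1) b = (-1 : ℤ) ^ (a + b + 1) • C (a + 1) (b + 1) - V a (b + 1) := by
      rw [← hsucc, smul_smul, ← pow_add, Even.neg_one_pow ⟨a + b + 1, rfl⟩, one_smul,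
        add_sub_cancel_left]
    rw [hV, ih, sum_range_succ _ (a + 1), show a + 1 + b + 1 - (a + 1) = b + 1 by omega,
      show a + (b + 1) + 1 = a + 1 + b + 1 by ring]
    module

structure IsTrisection {R : Type*} [Ring R] (A B G U : ℕ → R) : Prop where
  left_three_mul : ∀ i, G (3 * i) = A (2 * i)
  left_add : ∀ i, G (3 * i + 1) + G (3 * i + 2) = -A (2 * i + 1)
  right_three_mul : ∀ j, U (3 * j) = B (2 * j)
  right_add : ∀ j, U (3 * j + 1) + U (3 * j + 2) = B (2 * j + 1)
  mul_one_one : ∀ i j, G (3 * i + 1) * U (3 * j + 1) = 0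
  mul_two_two : ∀ i j, G (3 * i + 2) * U (3 * j + 2) = 0

namespace IsTrisection

variable {R : Type*} [Ring R] {A B G U : ℕ → R}

theorem mul_add_mul (h : IsTrisection A B G U) (i j : ℕ) :
    G (3 * i + 1) * U (3 * j + 2) + G (3 * i + 2) * U (3 * j + 1) =
      -(A (2 * i + 1) * B (2 * j + 1)) :=
  calc _ = (G (3 * i + 1) + G (3 * i + 2)) * (U (3 * j + 1) + U (3 * j + 2)) := by
        rw [add_mul, mul_add, mul_add, h.mul_one_one, h.mul_two_two]; abel
    _ = _ := by rw [h.left_add, h.right_add, neg_mul]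

theorem mul_sub_three_mul (h : IsTrisection A B G U) {i N : ℕ} (hi : i ≤ N) :
    G (3 * i) * U (3 * N - 3 * i) = (-1 : ℤ) ^ (2 * i) • (A (2 * i) * B (2 * N - 2 * i)) := by
  rw [show 3 * N - 3 * i = 3 * (N - i) by omega, show 2 * N - 2 * i = 2 * (N - i) by omega,
    h.left_three_mul, h.right_three_mul, (even_two_mul i).neg_one_pow, one_smul]

theorem mul_sub_three_mul_add (h : IsTrisection A B G U) {i N : ℕ} (hi : i < N) :
    G (3 * i + 1) * U (3 * N - (3 * i + 1)) + G (3 * i + 2) * U (3 * N - (3 * i + 2)) =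
      (-1 : ℤ) ^ (2 * i + 1) • (A (2 * i + 1) * B (2 * N - (2 * i + 1))) := by
  obtain ⟨n, rfl⟩ : ∃ n, N = i + n + 1 := ⟨N - i - 1, by omega⟩
  rw [show 3 * (i + n + 1) - (3 * i + 1) = 3 * n + 2 by omega,
    show 3 * (i + n + 1) - (3 * i + 2) = 3 * n + 1 by omega,
    show 2 * (i + n + 1) - (2 * i + 1) = 2 * n + 1 by omega, h.mul_add_mul,
    (odd_two_mul_add_one i).neg_one_pow, neg_one_zsmul]

theorem mul_add_mul_sub_three_mul (h : IsTrisection A B G U) {i N : ℕ} (hi : i ≤ N) :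
    G (3 * i) * U (3 * N + 2 - 3 * i) + G (3 * i) * U (3 * N + 1 - 3 * i) =
      (-1 : ℤ) ^ (2 * i) • (A (2 * i) * B (2 * N + 1 - 2 * i)) := by
  rw [show 3 * N + 2 - 3 * i = 3 * (N - i) + 2 by omega,
    show 3 * N + 1 - 3 * i = 3 * (N - i) + 1 by omega,
    show 2 * N + 1 - 2 * i = 2 * (N - i) + 1 by omega, ← mul_add, add_comm, h.right_add,
    h.left_three_mul, (even_two_mul i).neg_one_pow, one_smul]

theorem mul_add_mul_sub_three_mul_add (h : IsTrisection A B G U) {i N : ℕ} (hi : i < N) :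
    G (3 * i + 1) * U (3 * N + 2 - (3 * i + 1)) + G (3 * i + 1) * U (3 * N + 1 - (3 * i + 1)) +
        (G (3 * i + 2) * U (3 * N + 2 - (3 * i + 2)) +
          G (3 * i + 2) * U (3 * N + 1 - (3 * i + 2))) =
      (-1 : ℤ) ^ (2 * i + 1) • (A (2 * i + 1) * B (2 * N + 1 - (2 * i + 1))) := by
  obtain ⟨n, rfl⟩ : ∃ n, N = i + n + 1 := ⟨N - i - 1, by omega⟩
  rw [show 3 * (i + n + 1) + 2 - (3 * i + 1) = 3 * (n + 1) + 1 by omega,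
    show 3 * (i + n + 1) + 1 - (3 * i + 1) = 3 * (n + 1) by omega,
    show 3 * (i + n + 1) + 2 - (3 * i + 2) = 3 * (n + 1) by omega,
    show 3 * (i + n + 1) + 1 - (3 * i + 2) = 3 * n + 2 by omega,
    show 2 * (i + n + 1) + 1 - (2 * i + 1) = 2 * (n + 1) by omega,
    h.mul_one_one, h.mul_two_two, zero_add, add_zero, ← add_mul, h.left_add, h.right_three_mul,
    neg_mul, (odd_two_mul_add_one i).neg_one_pow, neg_one_zsmul]

theorem sum_range_three_mul_mul_sub (h : IsTrisection A B G U) {m N : ℕ} (hm : m ≤ N) :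
    ∑ j ∈ range (3 * m), G j * U (3 * N - j) =
      ∑ p ∈ range (2 * m), (-1 : ℤ) ^ p • (A p * B (2 * N - p)) :=
  sum_range_three_mul_eq_sum_range_two_mul _ _ m (fun _ hi => h.mul_sub_three_mul (by omega))
    fun _ hi => h.mul_sub_three_mul_add (by omega)

theorem sum_range_three_mul_add_one_mul_sub (h : IsTrisection A B G U) {m N : ℕ} (hm : m ≤ N) :
    ∑ j ∈ range (3 * m + 1), G j * U (3 * N - j) =
      ∑ p ∈ range (2 * m + 1), (-1 : ℤ) ^ p • (A p * B (2 * N - p)) :=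
  sum_range_three_mul_add_one_eq_sum_range_two_mul_add_one _ _ m
    (fun _ hi => h.mul_sub_three_mul (by omega)) fun _ hi => h.mul_sub_three_mul_add (by omega)

theorem sum_range_three_mul_mul_add_mul_sub (h : IsTrisection A B G U) {m N : ℕ} (hm : m ≤ N) :
    ∑ j ∈ range (3 * m), (G j * U (3 * N + 2 - j) + G j * U (3 * N + 1 - j)) =
      ∑ p ∈ range (2 * m), (-1 : ℤ) ^ p • (A p * B (2 * N + 1 - p)) :=
  sum_range_three_mul_eq_sum_range_two_mul _ _ m
    (fun _ hi => h.mul_add_mul_sub_three_mul (by omega))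
    fun _ hi => h.mul_add_mul_sub_three_mul_add (by omega)

theorem sum_range_three_mul_add_one_mul_add_mul_sub (h : IsTrisection A B G U) {m N : ℕ}
    (hm : m ≤ N) :
    ∑ j ∈ range (3 * m + 1), (G j * U (3 * N + 2 - j) + G j * U (3 * N + 1 - j)) =
      ∑ p ∈ range (2 * m + 1), (-1 : ℤ) ^ p • (A p * B (2 * N + 1 - p)) :=
  sum_range_three_mul_add_one_eq_sum_range_two_mul_add_one _ _ m
    (fun _ hi => h.mul_add_mul_sub_three_mul (by omega))
    fun _ hi => h.mul_add_mul_sub_three_mul_add (by omega)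

end IsTrisection

noncomputable def bideg (a b : ℕ) : Fin 2 →₀ ℕ := Finsupp.single 0 a + Finsupp.single 1 b

@[simp] theorem bideg_apply_zero (a b : ℕ) : bideg a b 0 = a := by simp [bideg]

@[simp] theorem bideg_apply_one (a b : ℕ) : bideg a b 1 = b := by simp [bideg]

theorem eq_bideg_iff {d : Fin 2 →₀ ℕ} {a b : ℕ} : d = bideg a b ↔ d 0 = a ∧ d 1 = b := by
  refine ⟨by rintro rfl; simp, fun ⟨h0, h1⟩ => ?_⟩
  ext i
  fin_cases i <;> simp [h0, h1]

theorem bideg_succ_left (a b : ℕ) : bideg (a + 1) b = Finsupp.single 0 1 + bideg a b :=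
  (eq_bideg_iff.2 ⟨by simp [add_comm], by simp⟩).symm

theorem bideg_succ_right (a b : ℕ) : bideg a (b + 1) = Finsupp.single 1 1 + bideg a b :=
  (eq_bideg_iff.2 ⟨by simp, by simp [add_comm]⟩).symm

section

variable {R : Type*} [CommSemiring R]

theorem coeff_bideg_mul {f g : MvPowerSeries (Fin 2) R} (hf : ∀ d, d 1 ≠ 0 → coeff d f = 0)
    (hg : ∀ d, d 0 ≠ 0 → coeff d g = 0) (a b : ℕ) :
    coeff (bideg a b) (f * g) = coeff (bideg a 0) f * coeff (bideg 0 b) g := by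
  rw [coeff_mul, sum_eq_single (bideg a 0, bideg 0 b)]
  · rintro ⟨d, e⟩ hde hne
    rw [HasAntidiagonal.mem_antidiagonal] at hde
    have h0 := congrArg (· 0) hde
    have h1 := congrArg (· 1) hde
    simp only [Finsupp.coe_add, Pi.add_apply, bideg_apply_zero, bideg_apply_one] at h0 h1
    by_cases hd : d 1 = 0
    · by_cases he : e 0 = 0
      · exact absurd (Prod.ext (eq_bideg_iff.2 ⟨by omega, hd⟩)
          (eq_bideg_iff.2 ⟨he, by omega⟩)) hne
      · rw [hg e he, mul_zero]
    · rw [hf d hd, zero_mul]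
  · intro h
    exact absurd (HasAntidiagonal.mem_antidiagonal.2 (eq_bideg_iff.2 ⟨by simp, by simp⟩)) h

theorem map_coeff_bideg_mul {n : Type*} [Fintype n]
    {A B : Matrix n n (MvPowerSeries (Fin 2) R)} (hA : ∀ d i j, d 1 ≠ 0 → coeff d (A i j) = 0)
    (hB : ∀ d i j, d 0 ≠ 0 → coeff d (B i j) = 0)
    (a b : ℕ) :
    (A * B).map (coeff (bideg a b)) = A.map (coeff (bideg a 0)) * B.map (coeff (bideg 0 b)) := by
  ext i j
  simp only [Matrix.map_apply, Matrix.mul_apply, map_sum]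
  exact sum_congr rfl fun t _ => coeff_bideg_mul (hA · i t) (hB · t j) a b

theorem coeff_bideg_X_add_X_mul (f : MvPowerSeries (Fin 2) R) (a b : ℕ) :
    coeff (bideg (a + 1) (b + 1)) ((X 0 + X 1) * f) =
      coeff (bideg a (b + 1)) f + coeff (bideg (a + 1) b) f := by
  rw [add_mul, map_add, X_def, X_def]
  nth_rw 1 [bideg_succ_left]
  nth_rw 2 [bideg_succ_right]
  rw [coeff_add_monomial_mul, coeff_add_monomial_mul, one_mul, one_mul]

theorem coeff_bideg_zero_X_add_X_mul (f : MvPowerSeries (Fin 2) R) (b : ℕ) :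
    coeff (bideg 0 (b + 1)) ((X 0 + X 1) * f) = coeff (bideg 0 b) f := by
  rw [add_mul, map_add, X_def, X_def, coeff_monomial_mul,
    if_neg (by simp [Finsupp.single_le_iff]), bideg_succ_right, coeff_add_monomial_mul, one_mul,
    zero_add]

variable {n : Type*} [DecidableEq n]

theorem coeff_bideg_one_apply_of_add_ne_zero {a b : ℕ} (hab : a + b ≠ 0) (i j : n) :
    coeff (R := R) (bideg a b) ((1 : Matrix n n (MvPowerSeries (Fin 2) R)) i j) = 0 := by
  have : bideg a b ≠ 0 := fun h => hab (by simpa using congrArg (fun d => d 0 + d 1) h)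
  by_cases hij : i = j <;> simp [Matrix.one_apply, hij, coeff_one, this]

end

section

variable {R : Type*} [CommRing R] {n : Type*} [DecidableEq n]

theorem map_coeff_bideg_zero_of_X_add_X_smul_eq_sub_one
    {S C : Matrix n n (MvPowerSeries (Fin 2) R)}
    (h : (X 0 + X 1 : MvPowerSeries (Fin 2) R) • S = C - 1) (b : ℕ) :
    S.map (coeff (bideg 0 b)) = C.map (coeff (bideg 0 (b + 1))) := by
  ext i j
  have := congrArg (coeff (bideg 0 (b + 1))) (congrFun₂ h i j)
  rwa [Matrix.smul_apply, smul_eq_mul, coeff_bideg_zero_X_add_X_mul, Matrix.sub_apply, map_sub,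
    coeff_bideg_one_apply_of_add_ne_zero (by omega), sub_zero] at this

theorem map_coeff_bideg_add_of_X_add_X_smul_eq_sub_one
    {S C : Matrix n n (MvPowerSeries (Fin 2) R)}
    (h : (X 0 + X 1 : MvPowerSeries (Fin 2) R) • S = C - 1) (a b : ℕ) :
    S.map (coeff (bideg a (b + 1))) + S.map (coeff (bideg (a + 1) b)) =
      C.map (coeff (bideg (a + 1) (b + 1))) := by
  ext i j
  have := congrArg (coeff (bideg (a + 1) (b + 1))) (congrFun₂ h i j)
  rwa [Matrix.smul_apply, smul_eq_mul, coeff_bideg_X_add_X_mul, Matrix.sub_apply, map_sub,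
    coeff_bideg_one_apply_of_add_ne_zero (by omega), sub_zero] at this

end

theorem eta_mul_transpose_mul_eta {α : Type*} [NonAssocSemiring α]
    (M : Matrix (Fin 2) (Fin 2) α) :
    !![0, 1; 1, 0] * Mᵀ * !![0, 1; 1, 0] = !![M 1 1, M 0 1; M 1 0, M 0 0] := by
  ext i j
  fin_cases i <;> fin_cases j <;> simp [mul_apply, vecMul, dotProduct, Fin.sum_univ_two]

theorem map_coeff_bideg_eta_mul_transpose_mul_eta_mul {R : Type*} [CommSemiring R]
    {Rw Rz : Matrix (Fin 2) (Fin 2) (MvPowerSeries (Fin 2) R)}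
    {r s : ℕ → Matrix (Fin 2) (Fin 2) R}
    (hRw : ∀ d i j, coeff d (Rw i j) = if d 1 = 0 then r (d 0) i j else 0)
    (hRz : ∀ d i j, coeff d (Rz i j) = if d 0 = 0 then s (d 1) i j else 0)
    (a b : ℕ) :
    (!![0, 1; 1, 0] * Rwᵀ * !![0, 1; 1, 0] * Rz).map (coeff (bideg a b)) =
      !![0, 1; 1, 0] * (r a)ᵀ * !![0, 1; 1, 0] * s b := by
  rw [map_coeff_bideg_mul (fun d i j hd => ?_) (fun d i j hd => by rw [hRz, if_neg hd]),
    eta_mul_transpose_mul_eta, eta_mul_transpose_mul_eta]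
  · congr 1
    · ext i j
      fin_cases i <;> fin_cases j <;> simp [hRw]
    · ext i j
      simp [hRz]
  · rw [eta_mul_transpose_mul_eta]
    fin_cases i <;> fin_cases j <;> simp [hRw, hd]

noncomputable def Rstar (n : ℕ) : Matrix (Fin 2) (Fin 2) ℂ :=
  !![0, 1; 1, 0] * (Rcoef n)ᵀ * !![0, 1; 1, 0]

theorem Rcoef_two_mul (n : ℕ) : Rcoef (2 * n) = !![qWK (2 * n), 0; 0, cWK (2 * n)] := by
  simp [Rcoef]

theorem Rcoef_two_mul_add_one (n : ℕ) :
    Rcoef (2 * n + 1) = !![0, -qWK (2 * n + 1); -cWK (2 * n + 1), 0] := by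
  simp [Rcoef, Nat.add_mod]

theorem Rstar_two_mul (n : ℕ) : Rstar (2 * n) = !![cWK (2 * n), 0; 0, qWK (2 * n)] := by
  rw [Rstar, eta_mul_transpose_mul_eta, Rcoef_two_mul]; simp

theorem Rstar_two_mul_add_one (n : ℕ) :
    Rstar (2 * n + 1) = !![0, -qWK (2 * n + 1); -cWK (2 * n + 1), 0] := by
  rw [Rstar, eta_mul_transpose_mul_eta, Rcoef_two_mul_add_one]; simp

theorem isTrisection_Rstar_Rcoef {G U : ℕ → Matrix (Fin 2) (Fin 2) ℂ}
    (hG0 : ∀ j : ℕ, G (3 * j) = !![cWK (2 * j), 0; 0, qWK (2 * j)])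
    (hG1 : ∀ j : ℕ, G (3 * j + 1) = !![0, qWK (2 * j + 1); 0, 0])
    (hG2 : ∀ j : ℕ, G (3 * j + 2) = !![0, 0; cWK (2 * j + 1), 0])
    (hU0 : ∀ j : ℕ, U (3 * j) = !![qWK (2 * j), 0; 0, cWK (2 * j)])
    (hU1 : ∀ j : ℕ, U (3 * j + 1) = !![0, -qWK (2 * j + 1); 0, 0])
    (hU2 : ∀ j : ℕ, U (3 * j + 2) = !![0, 0; -cWK (2 * j + 1), 0]) :
    IsTrisection Rstar Rcoef G U where
  left_three_mul i := by rw [hG0, Rstar_two_mul]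
  left_add i := by
    rw [hG1, hG2, Rstar_two_mul_add_one]
    ext a b
    fin_cases a <;> fin_cases b <;> simp
  right_three_mul j := by rw [hU0, Rcoef_two_mul]
  right_add j := by
    rw [hU1, hU2, Rcoef_two_mul_add_one]
    ext a b
    fin_cases a <;> fin_cases b <;> simp
  mul_one_one i j := by
    rw [hG1, hU1]
    ext a b
    fin_cases a <;> fin_cases b <;> simp [mul_apply]
  mul_two_two i j := by
    rw [hG2, hU2]
    ext a b
    fin_cases a <;> fin_cases b <;> simp [mul_apply]

theorem V_eq_neg_one_pow_smul_sum {Rw Rz SV : Matrix (Fin 2) (Fin 2) (MvPowerSeries (Fin 2) ℂ)}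
    {V : ℕ → ℕ → Matrix (Fin 2) (Fin 2) ℂ}
    (hRw : ∀ d i j, coeff d (Rw i j) = if d 1 = 0 then Rcoef (d 0) i j else 0)
    (hRz : ∀ d i j, coeff d (Rz i j) = if d 0 = 0 then Rcoef (d 1) i j else 0)
    (hSV : ∀ d i j, coeff d (SV i j) = (-1) ^ (d 0 + d 1) * V (d 0) (d 1) i j)
    (hgen : (X 0 + X 1 : MvPowerSeries (Fin 2) ℂ) • SV =
      (!![0, 1; 1, 0] * Rwᵀ * !![0, 1; 1, 0]) * Rz - 1) (a b : ℕ) :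
    V a b =
      (-1 : ℤ) ^ b • ∑ p ∈ range (a + 1), (-1 : ℤ) ^ p • (Rstar p * Rcoef (a + b + 1 - p)) := by
  have hC : ∀ a b, (!![0, 1; 1, 0] * Rwᵀ * !![0, 1; 1, 0] * Rz).map (coeff (bideg a b)) =
      Rstar a * Rcoef b :=
    map_coeff_bideg_eta_mul_transpose_mul_eta_mul hRw hRz
  have hW : ∀ a b, SV.map (coeff (bideg a b)) = (-1 : ℤ) ^ (a + b) • V a b := fun a b => by
    ext i j
    simp [hSV]
  refine eq_neg_one_pow_smul_sum (C := fun p q => Rstar p * Rcoef q) (fun b => ?_)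
    (fun a b => ?_) a b
  · rw [← hC, ← map_coeff_bideg_zero_of_X_add_X_smul_eq_sub_one hgen, hW, zero_add]
  · rw [← hC, ← map_coeff_bideg_add_of_X_add_X_smul_eq_sub_one hgen, hW, hW, smul_add,
      add_right_comm a 1 b, ← add_assoc]

/-- Here the variable `w` is `MvPowerSeries.X 0` and `z` is `MvPowerSeries.X 1`. -/
theorem A2_V_matrices_eq_affine_coordinates
    (Rw Rz SV : Matrix (Fin 2) (Fin 2) (MvPowerSeries (Fin 2) ℂ))
    (hRw : ∀ (d : Fin 2 →₀ ℕ) (i j : Fin 2),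
      MvPowerSeries.coeff (R := ℂ) d (Rw i j) = if d 1 = 0 then Rcoef (d 0) i j else 0)
    (hRz : ∀ (d : Fin 2 →₀ ℕ) (i j : Fin 2),
      MvPowerSeries.coeff (R := ℂ) d (Rz i j) = if d 0 = 0 then Rcoef (d 1) i j else 0)
    (V : ℕ → ℕ → Matrix (Fin 2) (Fin 2) ℂ)
    (hSV : ∀ (d : Fin 2 →₀ ℕ) (i j : Fin 2),
      MvPowerSeries.coeff (R := ℂ) d (SV i j) = (-1) ^ (d 0 + d 1) * V (d 0) (d 1) i j)
    (hgen : (MvPowerSeries.X 0 + MvPowerSeries.X 1 : MvPowerSeries (Fin 2) ℂ) • SV =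
      (!![0, 1; 1, 0] * Rwᵀ * !![0, 1; 1, 0]) * Rz - 1)
    (G U : ℕ → Matrix (Fin 2) (Fin 2) ℂ)
    (hG0 : ∀ j : ℕ, G (3 * j) = !![cWK (2 * j), 0; 0, qWK (2 * j)])
    (hG1 : ∀ j : ℕ, G (3 * j + 1) = !![0, qWK (2 * j + 1); 0, 0])
    (hG2 : ∀ j : ℕ, G (3 * j + 2) = !![0, 0; cWK (2 * j + 1), 0])
    (hU0 : ∀ j : ℕ, U (3 * j) = !![qWK (2 * j), 0; 0, cWK (2 * j)])
    (hU1 : ∀ j : ℕ, U (3 * j + 1) = !![0, -qWK (2 * j + 1); 0, 0])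
    (hU2 : ∀ j : ℕ, U (3 * j + 2) = !![0, 0; -cWK (2 * j + 1), 0])
    (Z : ℕ → ℕ → Matrix (Fin 2) (Fin 2) ℂ)
    (hZ : ∀ k l : ℕ, Z k l = -∑ j ∈ Finset.range (k + 1), G j * U (k + l + 1 - j)) :
    ∀ k l : ℕ,
      V (2 * k) (2 * l + 1) = Z (3 * k) (3 * l + 2) ∧
      V (2 * l + 1) (2 * k) = -Z (3 * l + 2) (3 * k) ∧
      V (2 * k) (2 * l) = -Z (3 * k) (3 * l + 1) - Z (3 * k) (3 * l) ∧
      V (2 * k + 1) (2 * l + 1) = Z (3 * k + 2) (3 * l + 2) + Z (3 * k + 2) (3 * l + 1) := by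
  have hV := V_eq_neg_one_pow_smul_sum hRw hRz hSV hgen
  have hT := isTrisection_Rstar_Rcoef hG0 hG1 hG2 hU0 hU1 hU2
  intro k l
  refine ⟨?_, ?_, ?_, ?_⟩
  · rw [hV, hZ, show 3 * k + (3 * l + 2) + 1 = 3 * (k + l + 1) by ring,
      show 2 * k + (2 * l + 1) + 1 = 2 * (k + l + 1) by ring,
      hT.sum_range_three_mul_add_one_mul_sub (by omega : k ≤ k + l + 1),
      (odd_two_mul_add_one l).neg_one_pow, neg_one_zsmul]
  · rw [hV, hZ, neg_neg, show 3 * l + 2 + 1 = 3 * (l + 1) by ring,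
      show 3 * l + 2 + 3 * k + 1 = 3 * (k + l + 1) by ring,
      show 2 * l + 1 + 1 = 2 * (l + 1) by ring,
      show 2 * l + 1 + 2 * k + 1 = 2 * (k + l + 1) by ring,
      hT.sum_range_three_mul_mul_sub (by omega : l + 1 ≤ k + l + 1),
      (even_two_mul k).neg_one_pow, one_smul]
  · rw [hV, hZ, hZ, neg_neg, sub_neg_eq_add, ← sum_add_distrib,
      show 3 * k + (3 * l + 1) + 1 = 3 * (k + l) + 2 by ring,
      show 3 * k + 3 * l + 1 = 3 * (k + l) + 1 by ring,
      show 2 * k + 2 * l + 1 = 2 * (k + l) + 1 by ring,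
      hT.sum_range_three_mul_add_one_mul_add_mul_sub (by omega : k ≤ k + l),
      (even_two_mul l).neg_one_pow, one_smul]
  · rw [hV, hZ, hZ, ← neg_add, ← sum_add_distrib, show 3 * k + 2 + 1 = 3 * (k + 1) by ring,
      show 3 * k + 2 + (3 * l + 2) + 1 = 3 * (k + l + 1) + 2 by ring,
      show 3 * k + 2 + (3 * l + 1) + 1 = 3 * (k + l + 1) + 1 by ring,
      show 2 * k + 1 + 1 = 2 * (k + 1) by ring,
      show 2 * k + 1 + (2 * l + 1) + 1 = 2 * (k + l + 1) + 1 by ring,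
      hT.sum_range_three_mul_mul_add_mul_sub (by omega : k + 1 ≤ k + l + 1),
      (odd_two_mul_add_one l).neg_one_pow, neg_one_zsmul]
end

section
/- Fix c ∈ ℝ and define u : ℝ × ℝ → ℝ by u(x, t) = −3·c·x·(c·(x³ + 2t) − 6)/(c·(x³ − t) + 3)², which equals ∂ₓ² log τ where τ(x, t) = 1 + c·x³/3 − c·t/3. Then at every point (x, t) with c·(x³ − t) + 3 ≠ 0, u satisfies the KdV equation ∂_t u = u·∂ₓu + (1/12)·∂ₓ³u. -/
/-!
Write `D = 3τ = c (x³ - t) + 3`; then `u = (log D)'' = (D'' D - D'²) / D²`. Every `x`-derivative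
of a quotient `N / Dⁿ` of polynomials is again of the form `N' / Dⁿ⁺¹` with `N'` given by the
quotient rule, and `u` is also such a quotient in the variable `t`. Hence `u_t`, `u_x` and `u_xxx`
are explicit rational functions with powers of `D` as denominators, and the KdV equation becomes
a polynomial identity once these are cleared.
-/

open Polynomial Topology

namespace Polynomial

variable {𝕜 : Type*} [NontriviallyNormedField 𝕜]

theorem hasDerivAt_eval_div_eval_pow (N D : 𝕜[X]) (n : ℕ) {x : 𝕜} (hx : D.eval x ≠ 0) :
    HasDerivAt (fun z => N.eval z / D.eval z ^ n)
      ((derivative N * D - n * derivative D * N).eval x / D.eval x ^ (n + 1)) x := by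
  refine ((N.hasDerivAt x).fun_div ((D.hasDerivAt x).fun_pow n) (pow_ne_zero n hx)).congr_deriv ?_
  obtain _ | n := n
  · simp [hx]
  · simp only [eval_sub, eval_mul, eval_natCast, Nat.add_sub_cancel]
    field_simp
    ring

noncomputable def derivNumerator (D : 𝕜[X]) (n : ℕ) (N : 𝕜[X]) : ℕ → 𝕜[X]
  | 0 => N
  | k + 1 => derivative (derivNumerator D n N k) * D
      - ((n + k : ℕ) : 𝕜[X]) * derivative D * derivNumerator D n N k

theorem iteratedDeriv_eval_div_eval_pow (N D : 𝕜[X]) (n k : ℕ) {x : 𝕜} (hx : D.eval x ≠ 0) :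
    iteratedDeriv k (fun z => N.eval z / D.eval z ^ n) x
      = (derivNumerator D n N k).eval x / D.eval x ^ (n + k) := by
  induction k generalizing x with
  | zero => simp [derivNumerator]
  | succ k ih =>
    have hD : {z | D.eval z ≠ 0} ∈ 𝓝 x :=
      (isOpen_ne_fun D.continuous continuous_const).mem_nhds hx
    rw [iteratedDeriv_succ, (Filter.eventuallyEq_of_mem hD fun z hz => ih hz).deriv_eq,
      (hasDerivAt_eval_div_eval_pow _ D (n + k) hx).deriv, derivNumerator]
    simp [add_assoc]

end Polynomial

-- `3τ`, as a polynomial in `x` for fixed `t`, and as a polynomial in `t` for fixed `x`.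
noncomputable def tauPolyX (c t : ℝ) : ℝ[X] := C c * X ^ 3 + C (3 - c * t)

noncomputable def tauPolyT (c x : ℝ) : ℝ[X] := C (-c) * X + C (c * x ^ 3 + 3)

@[simp]
theorem eval_tauPolyX (c t y : ℝ) : (tauPolyX c t).eval y = c * (y ^ 3 - t) + 3 := by
  simp only [tauPolyX, map_sub, map_mul, eval_add, eval_mul, eval_C, eval_pow, eval_X, eval_sub]
  ring

@[simp]
theorem eval_tauPolyT (c x s : ℝ) : (tauPolyT c x).eval s = c * (x ^ 3 - s) + 3 := by
  simp only [tauPolyT, map_neg, map_add, map_mul, map_pow, eval_add, eval_neg, eval_mul, eval_C,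
    eval_X, eval_pow]
  ring

@[simp]
theorem derivative_tauPolyX (c t : ℝ) : derivative (tauPolyX c t) = C (3 * c) * X ^ 2 := by
  simp only [tauPolyX, map_sub, map_mul, derivative_add, derivative_mul, derivative_C, zero_mul,
    derivative_pow, Nat.cast_ofNat, Nat.add_one_sub_one, derivative_X, mul_one, zero_add, mul_zero,
    add_zero, sub_self]
  ring

@[simp]
theorem derivative_tauPolyT (c x : ℝ) : derivative (tauPolyT c x) = C (-c) := by
  simp [tauPolyT]

theorem formula_eq_secondLogDeriv_tauPolyX (c t y : ℝ) :
    -3 * c * y * (c * (y ^ 3 + 2 * t) - 6) / (c * (y ^ 3 - t) + 3) ^ 2 =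
      (derivative (derivative (tauPolyX c t)) * tauPolyX c t - derivative (tauPolyX c t) ^ 2).eval y
        / (tauPolyX c t).eval y ^ 2 := by
  rw [eval_tauPolyX]
  congr 1
  simp only [neg_mul, derivative_tauPolyX, map_mul, derivative_mul, derivative_C, zero_mul, mul_zero,
    add_zero, derivative_pow, Nat.cast_ofNat, Nat.add_one_sub_one, pow_one, derivative_X, mul_one, zero_add,
    eval_sub, eval_mul, eval_C, eval_X, eval_tauPolyX, eval_pow]
  ring

theorem formula_eq_div_tauPolyT_sq (c x s : ℝ) :
    -3 * c * x * (c * (x ^ 3 + 2 * s) - 6) / (c * (x ^ 3 - s) + 3) ^ 2 =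
      (C (-6 * c ^ 2 * x) * X + C (-3 * c * x * (c * x ^ 3 - 6))).eval s
        / (tauPolyT c x).eval s ^ 2 := by
  rw [eval_tauPolyT]
  congr 1
  simp only [map_neg, map_mul, map_pow, map_sub, eval_add, eval_neg, eval_mul, eval_C, eval_pow,
    eval_X, eval_sub]
  ring

/-- The function `u(x,t) = -3cx(c(x³+2t)-6)/(c(x³-t)+3)² = ∂ₓ² log(1 + cx³/3 - ct/3)`
satisfies the KdV equation `u_t = u·u_x + (1/12)·u_xxx` at every point where
`c(x³-t)+3 ≠ 0`. -/
theorem simple_tau_solves_KdV (c : ℝ) (u : ℝ → ℝ → ℝ)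
    (hu : ∀ x t : ℝ,
      u x t = -3 * c * x * (c * (x ^ 3 + 2 * t) - 6) / (c * (x ^ 3 - t) + 3) ^ 2) :
    ∀ x t : ℝ, c * (x ^ 3 - t) + 3 ≠ 0 →
      deriv (fun s => u x s) t =
        u x t * deriv (fun y => u y t) x +
          (1 / 12) * iteratedDeriv 3 (fun y => u y t) x := by
  intro x t hx
  have hux : (fun y => u y t) = fun y =>
      (derivative (derivative (tauPolyX c t)) * tauPolyX c t - derivative (tauPolyX c t) ^ 2).eval y
        / (tauPolyX c t).eval y ^ 2 :=
    funext fun y => (hu y t).trans (formula_eq_secondLogDeriv_tauPolyX c t y)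
  have hut : (fun s => u x s) = fun s =>
      (C (-6 * c ^ 2 * x) * X + C (-3 * c * x * (c * x ^ 3 - 6))).eval s
        / (tauPolyT c x).eval s ^ 2 :=
    funext fun s => (hu x s).trans (formula_eq_div_tauPolyT_sq c x s)
  have hX : (tauPolyX c t).eval x ≠ 0 := by rwa [eval_tauPolyX]
  have hT : (tauPolyT c x).eval t ≠ 0 := by rwa [eval_tauPolyT]
  rw [hut, (hasDerivAt_eval_div_eval_pow _ _ 2 hT).deriv, hux, ← iteratedDeriv_one,
    iteratedDeriv_eval_div_eval_pow _ _ _ _ hX, iteratedDeriv_eval_div_eval_pow _ _ _ _ hX, hu]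
  simp only [neg_mul, map_neg, map_mul, map_pow, map_sub, derivative_add, derivative_mul,
    derivative_C, zero_mul, derivative_pow, Nat.cast_ofNat, Nat.add_one_sub_one, pow_one, mul_zero, add_zero,
    derivative_X, mul_one, zero_add, sub_self, neg_zero, derivative_tauPolyT, mul_neg, sub_neg_eq_add,
    eval_add, eval_neg, eval_mul, eval_C, eval_pow, eval_tauPolyT, eval_ofNat, eval_X, eval_sub, Nat.reduceAdd,
    derivNumerator, derivative_tauPolyX, eval_tauPolyX, one_div, derivative_ofNat]
  field_simp
  ring
end
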